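/- Consider the cone-constrained vector problem (P): C-minimize f(x) subject to g(x) ∈ −K, where f : X → ℝⁿ and g : X → ℝᵐ are defined on an open set X ⊆ ℝˢ, C ⊆ ℝⁿ and K ⊆ ℝᵐ are closed convex cones with vertex at the origin, and C has nonempty interior. Let S := {x ∈ X : g(x) ∈ −K} and suppose x̄ ∈ S is a weak local minimizer of (P). Define F(x) := max{λ·(f(x) − f(x̄)) + μ·g(x) : (λ,μ) ∈ Λ}, where Λ := {(λ,μ) : λ ∈ C*, μ ∈ K*, ‖λ‖² + ‖μ‖² = 1}. Then F⁻(x̄;u) ≥ 0 and F⁻²(x̄;0;u) ≥ 0 for all u ∈ ℝˢ. -/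

import Mathlib

open Filter Topology RealInnerProductSpace

/-- The positive polar (dual) cone `C* = {λ : λ·y ≥ 0 for all y ∈ C}`. -/
def positivePolar {d : ℕ} (C : Set (EuclideanSpace ℝ (Fin d))) :
    Set (EuclideanSpace ℝ (Fin d)) :=
  {l | ∀ y ∈ C, 0 ≤ ⟪l, y⟫}

/-- The multiplier set `Λ = {(λ,μ) : λ ∈ C*, μ ∈ K*, ‖λ‖² + ‖μ‖² = 1}`. -/
def multiplierSet {n m : ℕ} (C : Set (EuclideanSpace ℝ (Fin n)))
    (K : Set (EuclideanSpace ℝ (Fin m))) :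
    Set (EuclideanSpace ℝ (Fin n) × EuclideanSpace ℝ (Fin m)) :=
  {p | p.1 ∈ positivePolar C ∧ p.2 ∈ positivePolar K ∧ ‖p.1‖ ^ 2 + ‖p.2‖ ^ 2 = 1}

/-- The scalarizing function
`F(x) = max{λ·(f(x) − f(x̄)) + μ·g(x) : (λ,μ) ∈ Λ}` (the maximum is attained since `Λ` is
a nonempty compact set; it is expressed here as a supremum). -/
noncomputable def Fscal {s n m : ℕ}
    (f : EuclideanSpace ℝ (Fin s) → EuclideanSpace ℝ (Fin n))
    (g : EuclideanSpace ℝ (Fin s) → EuclideanSpace ℝ (Fin m))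
    (C : Set (EuclideanSpace ℝ (Fin n))) (K : Set (EuclideanSpace ℝ (Fin m)))
    (x₀ x : EuclideanSpace ℝ (Fin s)) : ℝ :=
  sSup ((fun p : EuclideanSpace ℝ (Fin n) × EuclideanSpace ℝ (Fin m) =>
      ⟪p.1, f x - f x₀⟫ + ⟪p.2, g x⟫) '' multiplierSet C K)

/-- The lower Hadamard directional derivative
`f⁻(x;u) = liminf_{t↓0, u'→u} (f(x+tu') − f(x))/t`, with values in `EReal`. -/
noncomputable def hadamardD1 {E : Type*} [NormedAddCommGroup E] [InnerProductSpace ℝ E]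
    (f : E → EReal) (x u : E) : EReal :=
  Filter.liminf
    (fun p : ℝ × E => (((p.1)⁻¹ : ℝ) : EReal) * (f (x + p.1 • p.2) - f x))
    ((𝓝[>] (0 : ℝ)) ×ˢ 𝓝 u)

/-- The lower Hadamard subdifferential
`∂⁻f(x) = {x* continuous linear | x*(u) ≤ f⁻(x;u) for all u}`. -/
def hadamardSubdiff {E : Type*} [NormedAddCommGroup E] [InnerProductSpace ℝ E]
    (f : E → EReal) (x : E) : Set (E →L[ℝ] ℝ) :=
  {xs | ∀ u : E, ((xs u : ℝ) : EReal) ≤ hadamardD1 f x u}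

/-- The lower second-order Hadamard derivative relative to `x₁ ∈ ∂⁻f(x)`:
`f⁻²(x;x₁;u) = liminf_{t↓0, u'→u} 2(f(x+tu') − f(x) − t·x₁(u'))/t²`. -/
noncomputable def hadamardD2 {E : Type*} [NormedAddCommGroup E] [InnerProductSpace ℝ E]
    (f : E → EReal) (x : E) (x₁ : E →L[ℝ] ℝ) (u : E) : EReal :=
  Filter.liminf
    (fun p : ℝ × E =>
      ((2 / p.1 ^ 2 : ℝ) : EReal) * (f (x + p.1 • p.2) - f x - ((p.1 * x₁ p.2 : ℝ) : EReal)))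
    ((𝓝[>] (0 : ℝ)) ×ˢ 𝓝 u)

/-!
Since `Λ` contains `(λ, 0)` and `(0, μ)` for every unit `λ ∈ C*` and `μ ∈ K*`, `F` is
nonnegative at every point `x` of `X` near `x̄`: if `x` is infeasible, separate `g x` from `−K`;
if `x` is feasible, weak minimality says `f x̄ − f x ∉ int C`, and separating this point from the
open convex cone `int C` gives `λ ∈ C* \ {0}` with `λ·(f x − f x̄) ≥ 0`. At `x̄` itself every term
`λ·0 + μ·g x̄` is `≤ 0`, so `x̄` is a local minimizer of `F`, and both Hadamard difference
quotients are nonnegative near `t = 0`.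
-/

section Separation

variable {E : Type*}

lemma ContinuousLinearMap.le_zero_of_bddAbove_on_cone [AddCommGroup E] [Module ℝ E]
    [TopologicalSpace E] {D : Set E} (hD : ∀ t : ℝ, 0 ≤ t → ∀ y ∈ D, t • y ∈ D)
    (φ : E →L[ℝ] ℝ) {c : ℝ} (hc : ∀ y ∈ D, φ y ≤ c) {y : E} (hy : y ∈ D) : φ y ≤ 0 := by
  by_contra! hpos
  have hscaled := hc (((|c| + 1) / φ y) • y) (hD _ (by positivity) y hy)
  rw [map_smul, smul_eq_mul, div_mul_cancel₀ _ hpos.ne'] at hscaled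
  linarith [le_abs_self c]

variable [NormedAddCommGroup E] [InnerProductSpace ℝ E] [CompleteSpace E]

def ProperCone.ofIsClosed {K : Set E} (hclosed : IsClosed K) (hconv : Convex ℝ K)
    (hcone : ∀ t : ℝ, 0 ≤ t → ∀ y ∈ K, t • y ∈ K) (hne : K.Nonempty) : ProperCone ℝ E where
  carrier := K
  zero_mem' := by
    obtain ⟨y, hy⟩ := hne
    simpa using hcone 0 le_rfl y hy
  add_mem' {x y} hx hy := by
    have hmid := hconv hx hy (by norm_num : (0 : ℝ) ≤ 1 / 2) (by norm_num : (0 : ℝ) ≤ 1 / 2)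
      (by norm_num)
    convert hcone 2 zero_le_two _ hmid using 1
    rw [smul_add, smul_smul, smul_smul]
    norm_num
  smul_mem' c x hx := hcone c c.2 x hx
  isClosed' := hclosed

lemma exists_inner_neg_of_notMem_cone {K : Set E} (hclosed : IsClosed K) (hconv : Convex ℝ K)
    (hcone : ∀ t : ℝ, 0 ≤ t → ∀ y ∈ K, t • y ∈ K) (hne : K.Nonempty) {v : E} (hv : v ∉ K) :
    ∃ l : E, (∀ y ∈ K, 0 ≤ ⟪l, y⟫) ∧ ⟪l, v⟫ < 0 := by
  obtain ⟨l, hl, hlv⟩ :=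
    (ProperCone.ofIsClosed hclosed hconv hcone hne).hyperplane_separation' (x₀ := v) hv
  exact ⟨l, fun y hy => real_inner_comm l y ▸ hl y hy, real_inner_comm l v ▸ hlv⟩

lemma exists_ne_zero_inner_nonpos_of_notMem_interior_cone {C : Set E} (hconv : Convex ℝ C)
    (hcone : ∀ t : ℝ, 0 ≤ t → ∀ y ∈ C, t • y ∈ C) (hint : (interior C).Nonempty) {v : E}
    (hv : v ∉ interior C) :
    ∃ l : E, l ≠ 0 ∧ (∀ y ∈ C, 0 ≤ ⟪l, y⟫) ∧ ⟪l, v⟫ ≤ 0 := by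
  obtain ⟨φ, hφ⟩ := geometric_hahn_banach_open_point hconv.interior isOpen_interior hv
  obtain ⟨y₀, hy₀⟩ := hint
  have hC_le : ∀ y ∈ C, φ y ≤ φ v := by
    intro y hy
    have hclosure : C ⊆ closure (interior C) := by
      rw [hconv.closure_interior_eq_closure_of_nonempty_interior ⟨y₀, hy₀⟩]
      exact subset_closure
    exact closure_minimal (fun a ha => (hφ a ha).le) (isClosed_le φ.continuous continuous_const)
      (hclosure hy)
  have hC_nonpos : ∀ y ∈ C, φ y ≤ 0 := fun y => φ.le_zero_of_bddAbove_on_cone hcone hC_le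
  have hφv : 0 ≤ φ v := by
    simpa using hC_le 0 (by simpa using hcone 0 le_rfl y₀ (interior_subset hy₀))
  refine ⟨(InnerProductSpace.toDual ℝ E).symm (-φ), ?_, fun y hy => ?_, ?_⟩
  · intro hzero
    have hφ_eq : ∀ y, φ y = 0 := fun y => by
      simpa [hzero] using (InnerProductSpace.toDual_symm_apply (x := y) (y := -φ)).symm
    simpa [hφ_eq] using hφ y₀ hy₀
  · simpa [InnerProductSpace.toDual_symm_apply] using hC_nonpos y hy
  · simpa [InnerProductSpace.toDual_symm_apply] using hφv

end Separation

section Scalarization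

variable {s n m : ℕ} {C : Set (EuclideanSpace ℝ (Fin n))} {K : Set (EuclideanSpace ℝ (Fin m))}

lemma inv_norm_smul_mem_positivePolar {d : ℕ} {D : Set (EuclideanSpace ℝ (Fin d))}
    {l : EuclideanSpace ℝ (Fin d)} (hl : l ∈ positivePolar D) : ‖l‖⁻¹ • l ∈ positivePolar D :=
  fun y hy => by
    rw [real_inner_smul_left]
    exact mul_nonneg (inv_nonneg.2 (norm_nonneg l)) (hl y hy)

lemma zero_mem_positivePolar {d : ℕ} (D : Set (EuclideanSpace ℝ (Fin d))) :
    (0 : EuclideanSpace ℝ (Fin d)) ∈ positivePolar D :=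
  fun y _ => by simp

lemma mk_inv_norm_smul_zero_mem_multiplierSet {l : EuclideanSpace ℝ (Fin n)}
    (hl : l ∈ positivePolar C) (hl₀ : l ≠ 0) : (‖l‖⁻¹ • l, 0) ∈ multiplierSet C K :=
  ⟨inv_norm_smul_mem_positivePolar hl, zero_mem_positivePolar K, by
    simp [norm_smul, inv_mul_cancel₀ (norm_ne_zero_iff.2 hl₀)]⟩

lemma mk_zero_inv_norm_smul_mem_multiplierSet {l : EuclideanSpace ℝ (Fin m)}
    (hl : l ∈ positivePolar K) (hl₀ : l ≠ 0) : (0, ‖l‖⁻¹ • l) ∈ multiplierSet C K :=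
  ⟨zero_mem_positivePolar C, inv_norm_smul_mem_positivePolar hl, by
    simp [norm_smul, inv_mul_cancel₀ (norm_ne_zero_iff.2 hl₀)]⟩

lemma bddAbove_image_multiplierSet (a : EuclideanSpace ℝ (Fin n))
    (b : EuclideanSpace ℝ (Fin m)) :
    BddAbove ((fun p : EuclideanSpace ℝ (Fin n) × EuclideanSpace ℝ (Fin m) =>
      ⟪p.1, a⟫ + ⟪p.2, b⟫) '' multiplierSet C K) := by
  refine ⟨‖a‖ + ‖b‖, ?_⟩
  rintro _ ⟨p, ⟨-, -, hp⟩, rfl⟩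
  have hp₁ : ‖p.1‖ ≤ 1 := by nlinarith [norm_nonneg p.1, sq_nonneg ‖p.2‖]
  have hp₂ : ‖p.2‖ ≤ 1 := by nlinarith [norm_nonneg p.2, sq_nonneg ‖p.1‖]
  calc ⟪p.1, a⟫ + ⟪p.2, b⟫ ≤ ‖p.1‖ * ‖a‖ + ‖p.2‖ * ‖b‖ :=
        add_le_add (real_inner_le_norm _ _) (real_inner_le_norm _ _)
    _ ≤ ‖a‖ + ‖b‖ := by
        gcongr <;> apply mul_le_of_le_one_left (norm_nonneg _) <;> assumption

variable {f : EuclideanSpace ℝ (Fin s) → EuclideanSpace ℝ (Fin n)}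
  {g : EuclideanSpace ℝ (Fin s) → EuclideanSpace ℝ (Fin m)} {x₀ x : EuclideanSpace ℝ (Fin s)}

lemma le_Fscal {p : EuclideanSpace ℝ (Fin n) × EuclideanSpace ℝ (Fin m)}
    (hp : p ∈ multiplierSet C K) : ⟪p.1, f x - f x₀⟫ + ⟪p.2, g x⟫ ≤ Fscal f g C K x₀ x :=
  le_csSup (bddAbove_image_multiplierSet _ _) ⟨p, hp, rfl⟩

lemma Fscal_self_nonpos (hx₀ : -g x₀ ∈ K) : Fscal f g C K x₀ x₀ ≤ 0 := by
  apply Real.sSup_nonpos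
  rintro _ ⟨p, ⟨-, hp₂, -⟩, rfl⟩
  have hμ : 0 ≤ ⟪p.2, -g x₀⟫ := hp₂ _ hx₀
  simp only [sub_self, inner_zero_right, zero_add]
  linarith [inner_neg_right (𝕜 := ℝ) p.2 (g x₀)]

lemma Fscal_nonneg (hCconv : Convex ℝ C) (hCcone : ∀ t : ℝ, 0 ≤ t → ∀ y ∈ C, t • y ∈ C)
    (hCint : (interior C).Nonempty) (hKclosed : IsClosed K) (hKconv : Convex ℝ K)
    (hKcone : ∀ t : ℝ, 0 ≤ t → ∀ y ∈ K, t • y ∈ K) (hKne : K.Nonempty)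
    (hx : -g x ∈ K → f x₀ - f x ∉ interior C) : 0 ≤ Fscal f g C K x₀ x := by
  by_cases hfeas : -g x ∈ K
  · obtain ⟨l, hl₀, hl, hlv⟩ :=
      exists_ne_zero_inner_nonpos_of_notMem_interior_cone hCconv hCcone hCint (hx hfeas)
    refine le_trans ?_ (le_Fscal (mk_inv_norm_smul_zero_mem_multiplierSet (K := K) hl hl₀))
    rw [inner_zero_left, add_zero, real_inner_smul_left, ← neg_sub, inner_neg_right]
    exact mul_nonneg (inv_nonneg.2 (norm_nonneg l)) (neg_nonneg.2 hlv)
  · obtain ⟨l, hl, hlv⟩ := exists_inner_neg_of_notMem_cone hKclosed hKconv hKcone hKne hfeas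
    have hl₀ : l ≠ 0 := by rintro rfl; simp at hlv
    refine le_trans ?_ (le_Fscal (mk_zero_inv_norm_smul_mem_multiplierSet (C := C) hl hl₀))
    rw [inner_zero_left, zero_add, real_inner_smul_left]
    rw [inner_neg_right] at hlv
    exact mul_nonneg (inv_nonneg.2 (norm_nonneg l)) (by linarith)

end Scalarization

section Hadamard

variable {E : Type*} [NormedAddCommGroup E] [InnerProductSpace ℝ E] {F : E → ℝ} {x : E}

lemma IsLocalMin.eventually_le_add_smul (hF : IsLocalMin F x) (u : E) :
    ∀ᶠ p : ℝ × E in 𝓝[>] 0 ×ˢ 𝓝 u, 0 < p.1 ∧ F x ≤ F (x + p.1 • p.2) := by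
  have hpos : ∀ᶠ p : ℝ × E in 𝓝[>] 0 ×ˢ 𝓝 u, 0 < p.1 :=
    (eventually_mem_nhdsWithin : ∀ᶠ t in 𝓝[>] (0 : ℝ), t ∈ Set.Ioi 0).prod_inl (𝓝 u)
  have hlim : Tendsto (fun p : ℝ × E => x + p.1 • p.2) (𝓝[>] 0 ×ˢ 𝓝 u) (𝓝 x) := by
    have ht : Tendsto (fun p : ℝ × E => p.1) (𝓝[>] 0 ×ˢ 𝓝 u) (𝓝 0) :=
      tendsto_fst.mono_right nhdsWithin_le_nhds
    simpa using (ht.smul tendsto_snd).const_add x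
  exact hpos.and (hlim.eventually hF)

lemma IsLocalMin.hadamardD1_nonneg (hF : IsLocalMin F x) (u : E) :
    0 ≤ hadamardD1 (fun y => (F y : EReal)) x u := by
  refine le_liminf_of_le (by isBoundedDefault) ?_
  filter_upwards [hF.eventually_le_add_smul u] with p ⟨hp, hle⟩
  rw [← EReal.coe_sub, ← EReal.coe_mul, EReal.coe_nonneg]
  exact mul_nonneg (inv_nonneg.2 hp.le) (sub_nonneg.2 hle)

lemma IsLocalMin.hadamardD2_zero_nonneg (hF : IsLocalMin F x) (u : E) :
    0 ≤ hadamardD2 (fun y => (F y : EReal)) x 0 u := by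
  refine le_liminf_of_le (by isBoundedDefault) ?_
  filter_upwards [hF.eventually_le_add_smul u] with p ⟨_, hle⟩
  rw [← EReal.coe_sub, ← EReal.coe_sub, ← EReal.coe_mul, EReal.coe_nonneg,
    zero_apply, mul_zero, sub_zero]
  exact mul_nonneg (by positivity) (sub_nonneg.2 hle)

end Hadamard

theorem weak_local_min_hadamard_conditions_general (s n m : ℕ)
    (X : Set (EuclideanSpace ℝ (Fin s))) (hX : IsOpen X)
    (f : EuclideanSpace ℝ (Fin s) → EuclideanSpace ℝ (Fin n))
    (g : EuclideanSpace ℝ (Fin s) → EuclideanSpace ℝ (Fin m))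
    (C : Set (EuclideanSpace ℝ (Fin n))) (K : Set (EuclideanSpace ℝ (Fin m)))
    (hCconv : Convex ℝ C)
    (hCcone : ∀ t : ℝ, 0 ≤ t → ∀ y ∈ C, t • y ∈ C)
    (hCint : (interior C).Nonempty)
    (hKclosed : IsClosed K) (hKconv : Convex ℝ K)
    (hKcone : ∀ t : ℝ, 0 ≤ t → ∀ y ∈ K, t • y ∈ K)
    (x₀ : EuclideanSpace ℝ (Fin s)) (hx₀X : x₀ ∈ X) (hx₀S : -g x₀ ∈ K)
    (hweak : ∃ N ∈ 𝓝 x₀, ∀ x ∈ N, x ∈ X → -g x ∈ K → f x₀ - f x ∉ interior C) :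
    (∀ u : EuclideanSpace ℝ (Fin s),
        0 ≤ hadamardD1 (fun y => ((Fscal f g C K x₀ y : ℝ) : EReal)) x₀ u) ∧
      ∀ u : EuclideanSpace ℝ (Fin s),
        0 ≤ hadamardD2 (fun y => ((Fscal f g C K x₀ y : ℝ) : EReal)) x₀ 0 u := by
  obtain ⟨N, hN, hNmin⟩ := hweak
  have hmin : IsLocalMin (Fscal f g C K x₀) x₀ := by
    filter_upwards [hN, hX.mem_nhds hx₀X] with x hxN hxX
    exact (Fscal_self_nonpos hx₀S).trans <| Fscal_nonneg hCconv hCcone hCint hKclosed hKconv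
      hKcone ⟨_, hx₀S⟩ (hNmin x hxN hxX)
  exact ⟨hmin.hadamardD1_nonneg, hmin.hadamardD2_zero_nonneg⟩

/-- If `x̄ ∈ S` is a weak local minimizer of the cone-constrained
vector problem (P), then `F⁻(x̄;u) ≥ 0` and `F⁻²(x̄;0;u) ≥ 0` for all `u ∈ ℝˢ`. -/
theorem weak_local_min_hadamard_conditions (s n m : ℕ)
    (X : Set (EuclideanSpace ℝ (Fin s))) (hX : IsOpen X)
    (f : EuclideanSpace ℝ (Fin s) → EuclideanSpace ℝ (Fin n))
    (g : EuclideanSpace ℝ (Fin s) → EuclideanSpace ℝ (Fin m))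
    (C : Set (EuclideanSpace ℝ (Fin n))) (K : Set (EuclideanSpace ℝ (Fin m)))
    (hCclosed : IsClosed C) (hCconv : Convex ℝ C)
    (hCcone : ∀ t : ℝ, 0 ≤ t → ∀ y ∈ C, t • y ∈ C)
    (hCint : (interior C).Nonempty)
    (hKclosed : IsClosed K) (hKconv : Convex ℝ K)
    (hKcone : ∀ t : ℝ, 0 ≤ t → ∀ y ∈ K, t • y ∈ K)
    (x₀ : EuclideanSpace ℝ (Fin s)) (hx₀X : x₀ ∈ X) (hx₀S : -g x₀ ∈ K)
    (hweak : ∃ N ∈ 𝓝 x₀, ∀ x ∈ N, x ∈ X → -g x ∈ K → f x₀ - f x ∉ interior C) :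
    (∀ u : EuclideanSpace ℝ (Fin s),
        0 ≤ hadamardD1 (fun y => ((Fscal f g C K x₀ y : ℝ) : EReal)) x₀ u) ∧
      ∀ u : EuclideanSpace ℝ (Fin s),
        0 ≤ hadamardD2 (fun y => ((Fscal f g C K x₀ y : ℝ) : EReal)) x₀ 0 u :=
  weak_local_min_hadamard_conditions_general s n m X hX f g C K hCconv hCcone hCint hKclosed hKconv
    hKcone x₀ hx₀X hx₀S hweak
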